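/- (Energy decay rate) If the kernel is admissible with β = min_r |γ_0(r)|² > 0, then for every m ≥ 1 and f ∈ L²(G): Σ_{p∈{1,…,J}^m} ‖U[p]f‖² ≤ (1−β) Σ_{p∈{1,…,J}^{m−1}} ‖U[p]f‖². -/

import Mathlib

open scoped BigOperators
open MeasureTheory

noncomputable def conv {G : Type*} [Group G] [Fintype G] (f g : G → ℂ) : G → ℂ :=
  fun x => (Fintype.card G : ℂ)⁻¹ * ∑ y, f y * g (y⁻¹ * x)

noncomputable def nsq {G : Type*} [Fintype G] (f : G → ℂ) : ℝ :=
  (Fintype.card G : ℝ)⁻¹ * ∑ x, Complex.normSq (f x)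

noncomputable def ip {G : Type*} [Fintype G] (f g : G → ℂ) : ℂ :=
  (Fintype.card G : ℂ)⁻¹ * ∑ x, f x * (starRingEnd ℂ) (g x)

noncomputable def gwavelet {G : Type*} [Group G] {k : ℕ} (d : Fin k → ℕ)
    (π : (r : Fin k) → G →* Matrix (Fin (d r)) (Fin (d r)) ℂ)
    (γ : Fin k → ℂ) : G → ℂ :=
  fun x => ∑ r, (d r : ℂ) * γ r * Matrix.trace (π r x)

noncomputable def Upath {G : Type*} [Group G] [Fintype G] {J : ℕ}
    (ψ : Fin J → G → ℂ) : List (Fin J) → (G → ℂ) → G → ℂ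
  | [], f => f
  | j :: p, f => Upath ψ p fun x => ((‖conv (ψ j) f x‖ : ℝ) : ℂ)

noncomputable def Sop {G : Type*} [Group G] [Fintype G] {k J : ℕ} (d : Fin k → ℕ)
    (π : (r : Fin k) → G →* Matrix (Fin (d r)) (Fin (d r)) ℂ)
    (γ : Fin (J + 1) → Fin k → ℂ) (p : List (Fin J)) (f : G → ℂ) : G → ℂ :=
  conv (gwavelet d π (γ 0)) (Upath (fun j => gwavelet d π (γ j.succ)) p f)

/-!
Schur orthogonality gives `χ_r ∗ χ_s = δ_rs χ_r / d_r` for the characters, so `ψ_a ∗ ψ_b = ψ_{ab}`,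
and unitarity makes `ψ_{conj γ}∗` the adjoint of `ψ_γ∗`. Hence `‖ψ_γ ∗ g‖² = E_g(|γ|²)` for a
linear form `E_g` on coefficient vectors; it is monotone, being nonnegative on squares, and
`E_g(1) ≤ ‖g‖²` because `ψ_1∗` is an orthogonal projection. Admissibility gives
`∑_{j ≥ 1} |γ_j|² = 1 - |γ_0|² ≤ 1 - β` pointwise, so the high-pass channels of one layer carry at
most `(1 - β) ‖g‖²`; splitting off the last step of each path yields the energy decay.
-/

section Convolution
variable {G : Type*} [Group G] [Fintype G]

lemma conv_sum_left {ι : Type*} (s : Finset ι) (a : ι → G → ℂ) (g : G → ℂ) :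
    conv (∑ i ∈ s, a i) g = ∑ i ∈ s, conv (a i) g := by
  ext x
  simp only [conv, Finset.sum_apply, Finset.sum_mul, Finset.mul_sum]
  exact Finset.sum_comm

lemma conv_sum_right {ι : Type*} (s : Finset ι) (a : G → ℂ) (g : ι → G → ℂ) :
    conv a (∑ i ∈ s, g i) = ∑ i ∈ s, conv a (g i) := by
  ext x
  simp only [conv, Finset.sum_apply, Finset.mul_sum]
  exact Finset.sum_comm

lemma conv_smul_left (c : ℂ) (a g : G → ℂ) : conv (c • a) g = c • conv a g := by
  ext x
  simp only [conv, Pi.smul_apply, smul_eq_mul, Finset.mul_sum]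
  exact Finset.sum_congr rfl fun _ _ => by ring

lemma conv_smul_right (c : ℂ) (a g : G → ℂ) : conv a (c • g) = c • conv a g := by
  ext x
  simp only [conv, Pi.smul_apply, smul_eq_mul, Finset.mul_sum]
  exact Finset.sum_congr rfl fun _ _ => by ring

lemma conv_add_left (a b g : G → ℂ) : conv (a + b) g = conv a g + conv b g := by
  ext x
  simp only [conv, Pi.add_apply, add_mul, Finset.sum_add_distrib, mul_add]

lemma conv_assoc (a b g : G → ℂ) : conv a (conv b g) = conv (conv a b) g := by
  ext x
  simp only [conv, Finset.mul_sum, Finset.sum_mul]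
  conv_rhs => rw [Finset.sum_comm]
  refine Finset.sum_congr rfl fun y _ => Fintype.sum_equiv (Equiv.mulLeft y) _ _ fun z => ?_
  simp only [Equiv.coe_mulLeft, mul_inv_rev, inv_mul_cancel_left, mul_assoc]
  ring

lemma ip_conv_left (a u v : G → ℂ) :
    ip (conv a u) v = ip u (conv (fun y => starRingEnd ℂ (a y⁻¹)) v) := by
  simp only [ip, conv, map_mul, map_sum, map_inv₀, map_natCast, Complex.conj_conj,
    Finset.mul_sum, Finset.sum_mul]
  rw [Finset.sum_comm]
  conv_rhs => rw [Finset.sum_comm]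
  refine Fintype.sum_equiv (Equiv.inv G) _ _ fun y => ?_
  refine (Fintype.sum_equiv (Equiv.mulLeft y⁻¹) _ _ fun w => ?_)
  simp only [Equiv.inv_apply, Equiv.coe_mulLeft, inv_inv, mul_inv_cancel_left]
  ring

end Convolution

section InnerProduct
variable {G : Type*} [Fintype G]

lemma ip_self (u : G → ℂ) : ip u u = nsq u := by
  simp [ip, nsq, Finset.mul_sum, Complex.mul_conj]

lemma ip_add_left (u v w : G → ℂ) : ip (u + v) w = ip u w + ip v w := by
  simp only [ip, Pi.add_apply, add_mul, Finset.sum_add_distrib, mul_add]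

lemma ip_smul_left (t : ℂ) (u v : G → ℂ) : ip (t • u) v = t * ip u v := by
  simp only [ip, Pi.smul_apply, smul_eq_mul, Finset.mul_sum]
  exact Finset.sum_congr rfl fun _ _ => by ring

lemma nsq_nonneg (u : G → ℂ) : 0 ≤ nsq u :=
  mul_nonneg (by positivity) (Finset.sum_nonneg fun x _ => Complex.normSq_nonneg _)

lemma nsq_norm (u : G → ℂ) : nsq (fun x => ((‖u x‖ : ℝ) : ℂ)) = nsq u := by
  simp [nsq, ← Complex.sq_norm, sq]

lemma nsq_sub (u v : G → ℂ) : nsq (u - v) = nsq u - 2 * (ip v u).re + nsq v := by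
  have hre : (ip v u).re = (Fintype.card G : ℝ)⁻¹ * ∑ x, (u x * starRingEnd ℂ (v x)).re := by
    rw [ip, ← Complex.ofReal_natCast, ← Complex.ofReal_inv, Complex.re_ofReal_mul, Complex.re_sum]
    congr 1
    refine Finset.sum_congr rfl fun x _ => ?_
    simp only [Complex.mul_re, Complex.conj_re, Complex.conj_im]
    ring
  simp only [hre, nsq, Pi.sub_apply, Complex.normSq_sub, Finset.sum_add_distrib,
    Finset.sum_sub_distrib, ← Finset.mul_sum]
  ring

end InnerProduct

section Representation
variable {G : Type*} [Group G] [Fintype G] {m n : Type*} [Fintype m] [Fintype n]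
  [DecidableEq m] [DecidableEq n]

noncomputable def sumConj (ρ : G →* Matrix m m ℂ) (σ : G →* Matrix n n ℂ) (E : Matrix m n ℂ) :
    Matrix m n ℂ :=
  ∑ y, ρ y * E * σ y⁻¹

lemma map_mul_sumConj (ρ : G →* Matrix m m ℂ) (σ : G →* Matrix n n ℂ) (E : Matrix m n ℂ)
    (x : G) : ρ x * sumConj ρ σ E = sumConj ρ σ E * σ x := by
  rw [sumConj, Matrix.mul_sum, Matrix.sum_mul]
  refine Fintype.sum_equiv (Equiv.mulLeft x) _ _ fun y => ?_
  simp only [Equiv.coe_mulLeft, mul_inv_rev, map_mul, Matrix.mul_assoc]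
  rw [← map_mul σ x⁻¹ x, inv_mul_cancel, map_one, Matrix.mul_one]

lemma card_smul_sumConj (ρ : G →* Matrix n n ℂ)
    (hirr : ∀ M : Matrix n n ℂ, (∀ x, M * ρ x = ρ x * M) → ∃ c : ℂ, M = c • 1)
    (E : Matrix n n ℂ) :
    (Fintype.card n : ℂ) • sumConj ρ ρ E = (Fintype.card G * E.trace) • 1 := by
  obtain ⟨c, hc⟩ := hirr _ fun x => (map_mul_sumConj ρ ρ E x).symm
  have htrace : (sumConj ρ ρ E).trace = Fintype.card G * E.trace := by
    simp [sumConj, Matrix.trace_sum, Matrix.trace_mul_cycle, ← map_mul]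
  rw [hc, Matrix.trace_smul, Matrix.trace_one, smul_eq_mul] at htrace
  rw [hc, smul_smul, ← htrace, mul_comm]

lemma trace_mul_trace_eq_sum_single (A : Matrix m m ℂ) (B : Matrix n n ℂ) :
    A.trace * B.trace = ∑ i, ∑ j,
      ((Matrix.single j i (1 : ℂ) : Matrix n m ℂ) * A * Matrix.single i j (1 : ℂ) * B).trace := by
  simp only [Matrix.single_mul_mul_single, Matrix.trace_single_mul, one_mul, mul_one,
    smul_eq_mul]
  exact Finset.sum_mul_sum _ _ _ _

-- Expanding the traces in matrix units brings the convolution of characters into the range of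
-- Schur's lemma.
lemma conv_trace_eq_sum_single (ρ : G →* Matrix m m ℂ) (σ : G →* Matrix n n ℂ) (x : G) :
    conv (fun y => (ρ y).trace) (fun y => (σ y).trace) x
      = (Fintype.card G : ℂ)⁻¹ * ∑ i, ∑ j,
          ((Matrix.single j i (1 : ℂ) : Matrix n m ℂ) * sumConj ρ σ (Matrix.single i j 1)
            * σ x).trace := by
  simp only [conv, sumConj, trace_mul_trace_eq_sum_single, Matrix.mul_sum, Matrix.sum_mul,
    Matrix.trace_sum]
  congr 1
  rw [Finset.sum_comm]
  refine Finset.sum_congr rfl fun i _ => ?_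
  rw [Finset.sum_comm]
  refine Finset.sum_congr rfl fun j _ => Finset.sum_congr rfl fun y _ => ?_
  simp only [map_mul, Matrix.mul_assoc]

lemma conv_trace_eq_zero (ρ : G →* Matrix m m ℂ) (σ : G →* Matrix n n ℂ)
    (hneq : ∀ T : Matrix m n ℂ, (∀ x, ρ x * T = T * σ x) → T = 0) :
    conv (fun y => (ρ y).trace) (fun y => (σ y).trace) = 0 := by
  ext x
  simp [conv_trace_eq_sum_single, hneq _ (map_mul_sumConj ρ σ _)]

lemma card_mul_conv_trace_self (ρ : G →* Matrix n n ℂ)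
    (hirr : ∀ M : Matrix n n ℂ, (∀ x, M * ρ x = ρ x * M) → ∃ c : ℂ, M = c • 1) (x : G) :
    (Fintype.card n : ℂ) * conv (fun y => (ρ y).trace) (fun y => (ρ y).trace) x
      = (ρ x).trace := by
  have hG : (Fintype.card G : ℂ) ≠ 0 := Nat.cast_ne_zero.2 Fintype.card_ne_zero
  have hrow : ∀ i, (Fintype.card n : ℂ) * ∑ j,
      (Matrix.single j i (1 : ℂ) * sumConj ρ ρ (Matrix.single i j 1) * ρ x).trace
        = Fintype.card G * ρ x i i := by
    intro i
    have hterm : ∀ j, (Fintype.card n : ℂ) *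
        (Matrix.single j i (1 : ℂ) * sumConj ρ ρ (Matrix.single i j 1) * ρ x).trace
          = Fintype.card G * (Matrix.single i j (1 : ℂ)).trace * ρ x i j := by
      intro j
      rw [← smul_eq_mul, ← Matrix.trace_smul, ← Matrix.smul_mul, ← Matrix.mul_smul,
        card_smul_sumConj ρ hirr, Matrix.mul_smul, Matrix.mul_one, Matrix.smul_mul,
        Matrix.trace_smul, Matrix.trace_single_mul, smul_eq_mul, one_smul]
    rw [Finset.mul_sum, Finset.sum_congr rfl fun j _ => hterm j,
      Fintype.sum_eq_single i fun j hj => by simp [Matrix.trace_single_eq_of_ne _ _ _ hj.symm]]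
    simp
  rw [conv_trace_eq_sum_single, mul_left_comm, Finset.mul_sum]
  simp only [hrow, ← Finset.mul_sum]
  rw [inv_mul_cancel_left₀ hG]
  rfl

end Representation

lemma trace_map_inv_eq_conj {G n : Type*} [Group G] [Fintype n] [DecidableEq n]
    (ρ : G →* Matrix n n ℂ) (hunit : ∀ x, ρ x ∈ Matrix.unitaryGroup n ℂ) (x : G) :
    (ρ x⁻¹).trace = starRingEnd ℂ (ρ x).trace := by
  have hstar : star (ρ x) = ρ x⁻¹ :=
    left_inv_eq_right_inv (Unitary.star_mul_self_of_mem (hunit x))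
      (by rw [← map_mul, mul_inv_cancel, map_one])
  rw [← hstar, Matrix.star_eq_conjTranspose, Matrix.trace_conjTranspose]
  rfl

section Wavelet
variable {G : Type*} [Group G] {k : ℕ} {d : Fin k → ℕ}
  {π : (r : Fin k) → G →* Matrix (Fin (d r)) (Fin (d r)) ℂ}

lemma gwavelet_eq_sum (c : Fin k → ℂ) :
    gwavelet d π c = ∑ r, ((d r : ℂ) * c r) • fun y => (π r y).trace := by
  ext x
  simp [gwavelet, Finset.sum_apply]

lemma gwavelet_add (c e : Fin k → ℂ) :
    gwavelet d π (c + e) = gwavelet d π c + gwavelet d π e := by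
  ext x
  simp only [gwavelet, Pi.add_apply, mul_add, add_mul, Finset.sum_add_distrib]

lemma gwavelet_smul (t : ℂ) (c : Fin k → ℂ) : gwavelet d π (t • c) = t • gwavelet d π c := by
  ext x
  simp only [gwavelet, Pi.smul_apply, smul_eq_mul, Finset.mul_sum]
  exact Finset.sum_congr rfl fun _ _ => by ring

lemma gwavelet_inv_conj (hunit : ∀ r x, π r x ∈ Matrix.unitaryGroup (Fin (d r)) ℂ)
    (c : Fin k → ℂ) :
    (fun y => starRingEnd ℂ (gwavelet d π c y⁻¹)) = gwavelet d π fun r => starRingEnd ℂ (c r) := by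
  ext y
  simp [gwavelet, trace_map_inv_eq_conj (π _) (hunit _)]

structure IsUnitaryIrrepFamily (d : Fin k → ℕ)
    (π : (r : Fin k) → G →* Matrix (Fin (d r)) (Fin (d r)) ℂ) : Prop where
  unitary : ∀ r x, π r x ∈ Matrix.unitaryGroup (Fin (d r)) ℂ
  commute_eq_smul_one : ∀ (r : Fin k) (M : Matrix (Fin (d r)) (Fin (d r)) ℂ),
    (∀ x, M * π r x = π r x * M) → ∃ c : ℂ, M = c • (1 : Matrix (Fin (d r)) (Fin (d r)) ℂ)
  intertwine_eq_zero : ∀ (r s : Fin k), r ≠ s → ∀ T : Matrix (Fin (d r)) (Fin (d s)) ℂ,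
    (∀ x, π r x * T = T * π s x) → T = 0

variable [Fintype G]

lemma conv_gwavelet_gwavelet
    (hirr : ∀ (r : Fin k) (M : Matrix (Fin (d r)) (Fin (d r)) ℂ),
      (∀ x, M * π r x = π r x * M) → ∃ c : ℂ, M = c • (1 : Matrix (Fin (d r)) (Fin (d r)) ℂ))
    (hneq : ∀ (r s : Fin k), r ≠ s → ∀ T : Matrix (Fin (d r)) (Fin (d s)) ℂ,
      (∀ x, π r x * T = T * π s x) → T = 0)
    (c e : Fin k → ℂ) :
    conv (gwavelet d π c) (gwavelet d π e) = gwavelet d π (c * e) := by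
  ext x
  simp only [gwavelet_eq_sum, conv_sum_left, conv_sum_right, conv_smul_left, conv_smul_right,
    Finset.sum_apply, Pi.smul_apply, Pi.mul_apply, smul_eq_mul]
  refine Finset.sum_congr rfl fun r _ => ?_
  rw [Fintype.sum_eq_single r fun s hs => by
    rw [conv_trace_eq_zero (π s) (π r) (hneq s r hs), Pi.zero_apply, mul_zero]]
  have hself := card_mul_conv_trace_self (π r) (hirr r) x
  rw [Fintype.card_fin] at hself
  linear_combination (c r * e r * d r) * hself

end Wavelet

section Energy
variable {G : Type*} [Group G] [Fintype G] {k : ℕ} {d : Fin k → ℕ}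
  {π : (r : Fin k) → G →* Matrix (Fin (d r)) (Fin (d r)) ℂ}

variable (d π) in
noncomputable def waveletEnergy (g : G → ℂ) : (Fin k → ℝ) →ₗ[ℝ] ℝ where
  toFun c := (ip (conv (gwavelet d π (Complex.ofReal ∘ c)) g) g).re
  map_add' c e := by
    have hadd : Complex.ofReal ∘ (c + e) = Complex.ofReal ∘ c + Complex.ofReal ∘ e :=
      funext fun r => Complex.ofReal_add _ _
    rw [hadd, gwavelet_add, conv_add_left, ip_add_left, Complex.add_re]
  map_smul' t c := by
    have hsmul : Complex.ofReal ∘ (t • c) = (t : ℂ) • (Complex.ofReal ∘ c) :=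
      funext fun r => Complex.ofReal_mul _ _
    rw [hsmul, gwavelet_smul, conv_smul_left, ip_smul_left, Complex.re_ofReal_mul]
    rfl

lemma waveletEnergy_apply (g : G → ℂ) (c : Fin k → ℝ) :
    waveletEnergy d π g c = (ip (conv (gwavelet d π (Complex.ofReal ∘ c)) g) g).re :=
  rfl

lemma nsq_conv_gwavelet_eq_waveletEnergy (hπ : IsUnitaryIrrepFamily d π) (c : Fin k → ℂ)
    (g : G → ℂ) :
    nsq (conv (gwavelet d π c) g) = waveletEnergy d π g fun r => Complex.normSq (c r) := by
  have hadj := ip_conv_left (gwavelet d π fun r => starRingEnd ℂ (c r)) (conv (gwavelet d π c) g) g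
  rw [← gwavelet_inv_conj hπ.unitary] at hadj
  simp only [inv_inv, Complex.conj_conj] at hadj
  rw [← Complex.ofReal_re (nsq _), ← ip_self, ← hadj, conv_assoc, gwavelet_inv_conj hπ.unitary,
    conv_gwavelet_gwavelet hπ.commute_eq_smul_one hπ.intertwine_eq_zero, waveletEnergy_apply]
  congr
  ext r
  exact (Complex.normSq_eq_conj_mul_self).symm

lemma waveletEnergy_mono (hπ : IsUnitaryIrrepFamily d π) (g : G → ℂ) :
    Monotone (waveletEnergy d π g) := by
  intro c e hce
  have hsq : e - c = fun r => Complex.normSq (Real.sqrt (e r - c r) : ℂ) := by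
    ext r
    rw [Complex.normSq_ofReal, Real.mul_self_sqrt (sub_nonneg.2 (hce r)), Pi.sub_apply]
  have hnonneg := nsq_nonneg (conv (gwavelet d π fun r => (Real.sqrt (e r - c r) : ℂ)) g)
  rw [nsq_conv_gwavelet_eq_waveletEnergy hπ, ← hsq, map_sub] at hnonneg
  linarith

lemma waveletEnergy_one_le (hπ : IsUnitaryIrrepFamily d π) (g : G → ℂ) :
    waveletEnergy d π g 1 ≤ nsq g := by
  have hP : nsq (conv (gwavelet d π 1) g) = waveletEnergy d π g 1 := by
    rw [nsq_conv_gwavelet_eq_waveletEnergy hπ]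
    congr
    ext r
    exact Complex.normSq_one
  have hE : waveletEnergy d π g 1 = (ip (conv (gwavelet d π 1) g) g).re := by
    have hone : Complex.ofReal ∘ (1 : Fin k → ℝ) = 1 := funext fun _ => Complex.ofReal_one
    rw [waveletEnergy_apply, hone]
  have hnonneg := nsq_nonneg (g - conv (gwavelet d π 1) g)
  rw [nsq_sub] at hnonneg
  linarith

lemma sum_nsq_conv_gwavelet_succ_le (hπ : IsUnitaryIrrepFamily d π) {J : ℕ}
    (γ : Fin (J + 1) → Fin k → ℂ) (hPar : ∀ r, ∑ j, Complex.normSq (γ j r) = 1)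
    {β : ℝ} (hβ : ∀ r, β ≤ Complex.normSq (γ 0 r)) (hβ1 : β ≤ 1) (g : G → ℂ) :
    ∑ j : Fin J, nsq (conv (gwavelet d π (γ j.succ)) g) ≤ (1 - β) * nsq g := by
  have hhigh : (∑ j : Fin J, fun r => Complex.normSq (γ j.succ r)) ≤ (1 - β) • 1 := by
    intro r
    have := hPar r
    rw [Fin.sum_univ_succ] at this
    simp only [Finset.sum_apply, Pi.smul_apply, Pi.one_apply, smul_eq_mul, mul_one]
    linarith [hβ r]
  calc ∑ j : Fin J, nsq (conv (gwavelet d π (γ j.succ)) g)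
      = waveletEnergy d π g (∑ j : Fin J, fun r => Complex.normSq (γ j.succ r)) := by
        simp only [nsq_conv_gwavelet_eq_waveletEnergy hπ, map_sum]
    _ ≤ waveletEnergy d π g ((1 - β) • 1) := waveletEnergy_mono hπ g hhigh
    _ = (1 - β) * waveletEnergy d π g 1 := by rw [map_smul, smul_eq_mul]
    _ ≤ (1 - β) * nsq g :=
        mul_le_mul_of_nonneg_left (waveletEnergy_one_le hπ g) (sub_nonneg.2 hβ1)

end Energy

section Path
variable {G : Type*} [Group G] [Fintype G] {J : ℕ}

lemma Upath_append (ψ : Fin J → G → ℂ) (p q : List (Fin J)) (f : G → ℂ) :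
    Upath ψ (p ++ q) f = Upath ψ q (Upath ψ p f) := by
  induction p generalizing f with
  | nil => rfl
  | cons j p ih => exact ih _

lemma sum_nsq_Upath_succ (ψ : Fin J → G → ℂ) (f : G → ℂ) (m : ℕ) :
    ∑ p : Fin (m + 1) → Fin J, nsq (Upath ψ (List.ofFn p) f)
      = ∑ q : Fin m → Fin J, ∑ j, nsq (conv (ψ j) (Upath ψ (List.ofFn q) f)) := by
  rw [← (Fin.snocEquiv fun _ => Fin J).sum_comp, Fintype.sum_prod_type, Finset.sum_comm]
  refine Finset.sum_congr rfl fun q _ => Finset.sum_congr rfl fun j _ => ?_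
  simp only [Fin.snocEquiv, Equiv.coe_fn_mk, List.ofFn_succ', Fin.snoc_castSucc, Fin.snoc_last,
    List.concat_eq_append, Upath_append]
  exact nsq_norm _

end Path

theorem stmt13_general {G : Type*} [Group G] [Fintype G]
    {k : ℕ} (d : Fin k → ℕ)
    (π : (r : Fin k) → G →* Matrix (Fin (d r)) (Fin (d r)) ℂ)
    (hunit : ∀ r x, π r x ∈ Matrix.unitaryGroup (Fin (d r)) ℂ)
    (hirr : ∀ (r : Fin k) (M : Matrix (Fin (d r)) (Fin (d r)) ℂ),
      (∀ x, M * π r x = π r x * M) → ∃ c : ℂ, M = c • (1 : Matrix (Fin (d r)) (Fin (d r)) ℂ))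
    (hneq : ∀ (r s : Fin k), r ≠ s → ∀ T : Matrix (Fin (d r)) (Fin (d s)) ℂ,
      (∀ x, π r x * T = T * π s x) → T = 0)
    (hcard : Nat.card (ConjClasses G) = k)
    {J : ℕ} (γ : Fin (J + 1) → Fin k → ℂ)
    (hPar : ∀ r : Fin k, ∑ j : Fin (J + 1), Complex.normSq (γ j r) = 1)
    (β : ℝ) (hβ : ∀ r : Fin k, β ≤ Complex.normSq (γ 0 r))
    (f : G → ℂ) (m : ℕ) :
    ∑ p : Fin (m + 1) → Fin J,
        nsq (Upath (fun j => gwavelet d π (γ j.succ)) (List.ofFn p) f)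
      ≤ (1 - β) * ∑ p : Fin m → Fin J,
          nsq (Upath (fun j => gwavelet d π (γ j.succ)) (List.ofFn p) f) := by
  have hk : 0 < k := hcard ▸ Nat.card_pos
  have hβ1 : β ≤ 1 := (hβ ⟨0, hk⟩).trans <| hPar ⟨0, hk⟩ ▸
    Finset.single_le_sum (fun j _ => Complex.normSq_nonneg (γ j ⟨0, hk⟩)) (Finset.mem_univ 0)
  rw [sum_nsq_Upath_succ, Finset.mul_sum]
  exact Finset.sum_le_sum fun q _ =>
    sum_nsq_conv_gwavelet_succ_le ⟨hunit, hirr, hneq⟩ γ hPar hβ hβ1 _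

theorem stmt13 {G : Type*} [Group G] [Fintype G]
    {k : ℕ} (d : Fin k → ℕ) (hdpos : ∀ r, 0 < d r)
    (π : (r : Fin k) → G →* Matrix (Fin (d r)) (Fin (d r)) ℂ)
    (hunit : ∀ r x, π r x ∈ Matrix.unitaryGroup (Fin (d r)) ℂ)
    (hirr : ∀ (r : Fin k) (M : Matrix (Fin (d r)) (Fin (d r)) ℂ),
      (∀ x, M * π r x = π r x * M) → ∃ c : ℂ, M = c • (1 : Matrix (Fin (d r)) (Fin (d r)) ℂ))
    (hneq : ∀ (r s : Fin k), r ≠ s → ∀ T : Matrix (Fin (d r)) (Fin (d s)) ℂ,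
      (∀ x, π r x * T = T * π s x) → T = 0)
    (hcard : Nat.card (ConjClasses G) = k)
    {J : ℕ} (γ : Fin (J + 1) → Fin k → ℂ)
    (hPar : ∀ r : Fin k, ∑ j : Fin (J + 1), Complex.normSq (γ j r) = 1)
    (β : ℝ) (hβpos : 0 < β) (hβ : ∀ r : Fin k, β ≤ Complex.normSq (γ 0 r))
    (f : G → ℂ) (m : ℕ) :
    ∑ p : Fin (m + 1) → Fin J,
        nsq (Upath (fun j => gwavelet d π (γ j.succ)) (List.ofFn p) f)
      ≤ (1 - β) * ∑ p : Fin m → Fin J,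
          nsq (Upath (fun j => gwavelet d π (γ j.succ)) (List.ofFn p) f) :=
  stmt13_general d π hunit hirr hneq hcard γ hPar β hβ f m
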